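/- arXiv:1605.00281 — 4 statements merged into one kernel-verified Lean document; each statement's English description precedes it below -/
import Mathlib

section
/- Let a > 0 and b be real numbers and let 0 ≤ x < 1. Then ∫_0^x u^{a−1} (1−u)^{b−1} du = (1/a) · x^a · (1−x)^b · Σ_{k=0}^{∞} (a+b)_k / (a+1)_k · x^k, where the series converges absolutely for 0 ≤ x < 1. -/
open MeasureTheory Finset

/-- Pochhammer symbol `(a)_k = a (a+1) ⋯ (a+k-1)`. -/
noncomputable def poch (a : ℝ) (k : ℕ) : ℝ := (ascPochhammer ℝ k).eval a

/-!
Write `w u = u^(a-1) (1-u)^(b-1)` and `c k = (a+b)_k / (a+1)_k`. The recurrence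
`c (k+1) (a+k+1) = c k (a+b+k)` makes the derivative of `u^a (1-u)^b ∑_{k<n} c k u^k`
telescope to `w u (a - c n (a+n) u^n)`, hence
`a ∫₀ˣ w - c n (a+n) ∫₀ˣ w u u^n du = x^a (1-x)^b ∑_{k<n} c k x^k`.
The remainder is at most `|c n (a+n) x^n| ∫₀ˣ |w|`, and `c n (a+n) x^n → 0` by the ratio
test: consecutive terms have ratio `(a+b+n)/(a+n) · x → x`.
-/

open Filter Topology

lemma poch_succ (p : ℝ) (k : ℕ) : poch p (k + 1) = poch p k * (p + k) :=
  ascPochhammer_succ_eval k p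

lemma poch_div_poch_succ_mul {q : ℝ} (p : ℝ) (hq : 0 < q) (k : ℕ) :
    poch p (k + 1) / poch q (k + 1) * (q + k) = poch p k / poch q k * (p + k) := by
  have hk : poch q k ≠ 0 := (ascPochhammer_pos k q hq).ne'
  have hqk : q + k ≠ 0 := by positivity
  rw [poch_succ, poch_succ]
  field_simp

lemma summable_abs_of_eq_mul_of_tendsto {f ρ : ℕ → ℝ} {l : ℝ} (hl : |l| < 1)
    (hf : ∀ n, f (n + 1) = ρ n * f n) (hρ : Tendsto ρ atTop (𝓝 l)) :
    Summable fun n => |f n| := by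
  obtain ⟨r, hlr, hr⟩ := exists_between hl
  refine summable_of_ratio_norm_eventually_le hr ?_
  filter_upwards [hρ.abs.eventually_le_const hlr] with n hn
  rw [Real.norm_of_nonneg (abs_nonneg _), Real.norm_of_nonneg (abs_nonneg _), hf, abs_mul]
  exact mul_le_mul_of_nonneg_right hn (abs_nonneg _)

lemma hasDerivAt_rpow_mul_one_sub_rpow (p b : ℝ) {u : ℝ} (hu0 : 0 < u) (hu1 : u < 1) :
    HasDerivAt (fun y => y ^ p * (1 - y) ^ b)
      (u ^ (p - 1) * (1 - u) ^ (b - 1) * (p * (1 - u) - b * u)) u := by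
  have h1u : 1 - u ≠ 0 := (sub_pos.2 hu1).ne'
  have hpow := Real.hasDerivAt_rpow_const (p := p) (Or.inl hu0.ne')
  have hcompl := ((hasDerivAt_id' u).const_sub 1).rpow_const (p := b) (Or.inl h1u)
  refine (hpow.mul hcompl).congr_deriv ?_
  rw [Real.rpow_sub_one hu0.ne', Real.rpow_sub_one h1u]
  field_simp
  ring

lemma intervalIntegrable_rpow_mul_one_sub_rpow {a : ℝ} (ha : 0 < a) (b : ℝ) {x : ℝ}
    (hx : x < 1) :
    IntervalIntegrable (fun u => u ^ (a - 1) * (1 - u) ^ (b - 1)) volume 0 x := by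
  refine (intervalIntegral.intervalIntegrable_rpow' (by linarith)).mul_continuousOn ?_
  refine (continuousOn_const.sub continuousOn_id).rpow_const fun u hu => Or.inl ?_
  have : u ≤ max 0 x := (Set.mem_uIcc.1 hu).elim (fun h => h.2.trans (le_max_right _ _))
    (fun h => h.2.trans (le_max_left _ _))
  exact (sub_pos.2 (this.trans_lt (max_lt one_pos hx))).ne'

lemma tendsto_integral_mul_pow {g : ℝ → ℝ} {d : ℕ → ℝ} {x : ℝ} (hx : 0 ≤ x)
    (hg : IntervalIntegrable g volume 0 x) (hd : Tendsto (fun n => d n * x ^ n) atTop (𝓝 0)) :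
    Tendsto (fun n => ∫ u in (0 : ℝ)..x, g u * (d n * u ^ n)) atTop (𝓝 0) := by
  have hbound : ∀ n, ‖∫ u in (0 : ℝ)..x, g u * (d n * u ^ n)‖
      ≤ ‖d n * x ^ n‖ * ∫ u in (0 : ℝ)..x, ‖g u‖ := fun n => by
    refine (intervalIntegral.norm_integral_le_of_norm_le hx (ae_of_all _ fun u hu => ?_)
      (hg.norm.const_mul ‖d n * x ^ n‖)).trans_eq (intervalIntegral.integral_const_mul _ _)
    have hun : ‖u ^ n‖ ≤ ‖x ^ n‖ := by
      rw [Real.norm_of_nonneg (pow_nonneg hu.1.le n), Real.norm_of_nonneg (pow_nonneg hx n)]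
      exact pow_le_pow_left₀ hu.1.le hu.2 n
    rw [norm_mul, norm_mul, norm_mul, mul_comm]
    gcongr
  simpa using squeeze_zero_norm hbound
    (by simpa using hd.norm.mul_const (∫ u in (0 : ℝ)..x, ‖g u‖))

section BetaSeries

variable {a b : ℝ} {c : ℕ → ℝ}

lemma sum_range_mul_pow_telescope (hc : ∀ k : ℕ, c (k + 1) * (a + k + 1) = c k * (a + b + k))
    (hc0 : c 0 = 1) (u : ℝ) (n : ℕ) :
    ∑ k ∈ range n, c k * ((a + k) * (1 - u) - b * u) * u ^ k = a - c n * (a + n) * u ^ n := by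
  have hstep : ∀ k ∈ range n, c k * ((a + k) * (1 - u) - b * u) * u ^ k
      = c k * (a + k) * u ^ k - c (k + 1) * (a + ↑(k + 1)) * u ^ (k + 1) := fun k _ => by
    push_cast
    linear_combination u ^ (k + 1) * hc k
  rw [sum_congr rfl hstep, sum_range_sub']
  simp [hc0]

lemma summable_abs_mul_add_mul_pow (ha : 0 < a)
    (hc : ∀ k : ℕ, c (k + 1) * (a + k + 1) = c k * (a + b + k)) {x : ℝ} (hx : |x| < 1) :
    Summable fun k : ℕ => |c k * (a + k) * x ^ k| := by
  refine summable_abs_of_eq_mul_of_tendsto (ρ := fun k => (a + b + k) / (a + k) * x) hx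
    (fun k => ?_) ?_
  · have hak : a + k ≠ 0 := by positivity
    push_cast
    rw [← add_assoc, hc k]
    field_simp
    ring
  · simpa using (tendsto_add_mul_div_add_mul_atTop_nhds (a + b) a 1 one_ne_zero).mul_const x

lemma summable_abs_mul_pow (ha : 0 < a)
    (hc : ∀ k : ℕ, c (k + 1) * (a + k + 1) = c k * (a + b + k)) {x : ℝ} (hx : |x| < 1) :
    Summable fun k : ℕ => |c k * x ^ k| := by
  refine ((summable_abs_mul_add_mul_pow ha hc hx).div_const a).of_nonneg_of_le
    (fun _ => abs_nonneg _) fun k => ?_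
  rw [le_div_iff₀ ha, abs_mul, abs_mul, abs_mul, abs_of_pos (by positivity : 0 < a + k),
    mul_right_comm (|c k|)]
  gcongr
  simp

lemma hasDerivAt_sum_mul_rpow_mul_one_sub_rpow
    (hc : ∀ k : ℕ, c (k + 1) * (a + k + 1) = c k * (a + b + k)) (hc0 : c 0 = 1) (n : ℕ)
    {u : ℝ} (hu0 : 0 < u) (hu1 : u < 1) :
    HasDerivAt (fun y => ∑ k ∈ range n, c k * (y ^ (a + k) * (1 - y) ^ b))
      (u ^ (a - 1) * (1 - u) ^ (b - 1) * (a - c n * (a + n) * u ^ n)) u := by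
  rw [← sum_range_mul_pow_telescope hc hc0, mul_sum]
  refine HasDerivAt.fun_sum fun k _ => ?_
  refine ((hasDerivAt_rpow_mul_one_sub_rpow (a + k) b hu0 hu1).const_mul (c k)).congr_deriv ?_
  rw [add_sub_right_comm, Real.rpow_add hu0, Real.rpow_natCast]
  ring

lemma integral_rpow_mul_one_sub_rpow_sub_eq (ha : 0 < a)
    (hc : ∀ k : ℕ, c (k + 1) * (a + k + 1) = c k * (a + b + k)) (hc0 : c 0 = 1)
    {x : ℝ} (hx0 : 0 ≤ x) (hx1 : x < 1) (n : ℕ) :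
    (a * ∫ u in (0 : ℝ)..x, u ^ (a - 1) * (1 - u) ^ (b - 1))
      - ∫ u in (0 : ℝ)..x, u ^ (a - 1) * (1 - u) ^ (b - 1) * (c n * (a + n) * u ^ n)
      = x ^ a * (1 - x) ^ b * ∑ k ∈ range n, c k * x ^ k := by
  set F : ℝ → ℝ := fun y => ∑ k ∈ range n, c k * (y ^ (a + k) * (1 - y) ^ b)
  have hw := intervalIntegrable_rpow_mul_one_sub_rpow ha b hx1
  have hrem : IntervalIntegrable
      (fun u => u ^ (a - 1) * (1 - u) ^ (b - 1) * (c n * (a + n) * u ^ n)) volume 0 x :=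
    hw.mul_continuousOn (by fun_prop)
  have hcont : ContinuousOn F (Set.Icc 0 x) := by
    refine continuousOn_finsetSum _ fun k _ => continuousOn_const.mul
      ((Real.continuous_rpow_const (by positivity)).continuousOn.mul
        ((continuousOn_const.sub continuousOn_id).rpow_const fun u hu => Or.inl ?_))
    exact (sub_pos.2 (hu.2.trans_lt hx1)).ne'
  have hderiv : ∀ u ∈ Set.Ioo 0 x, HasDerivAt F
      (u ^ (a - 1) * (1 - u) ^ (b - 1) * (a - c n * (a + n) * u ^ n)) u := fun u hu =>
    hasDerivAt_sum_mul_rpow_mul_one_sub_rpow hc hc0 n hu.1 (hu.2.trans hx1)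
  have hF0 : F 0 = 0 := sum_eq_zero fun k _ => by
    simp [Real.zero_rpow (by positivity : a + k ≠ 0)]
  have hFx : F x = x ^ a * (1 - x) ^ b * ∑ k ∈ range n, c k * x ^ k := by
    rw [mul_sum]
    refine sum_congr rfl fun k _ => ?_
    rw [Real.rpow_add' hx0 (by positivity), Real.rpow_natCast]
    ring
  calc (a * ∫ u in (0 : ℝ)..x, u ^ (a - 1) * (1 - u) ^ (b - 1))
        - ∫ u in (0 : ℝ)..x, u ^ (a - 1) * (1 - u) ^ (b - 1) * (c n * (a + n) * u ^ n)
      = ∫ u in (0 : ℝ)..x, u ^ (a - 1) * (1 - u) ^ (b - 1) * (a - c n * (a + n) * u ^ n) := by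
        rw [← intervalIntegral.integral_const_mul,
          ← intervalIntegral.integral_sub (hw.const_mul a) hrem]
        congr 1 with u
        ring
    _ = F x - F 0 := intervalIntegral.integral_eq_sub_of_hasDerivAt_of_le hx0 hcont hderiv
        ((hw.const_mul a).sub hrem |>.congr fun u _ => by ring)
    _ = x ^ a * (1 - x) ^ b * ∑ k ∈ range n, c k * x ^ k := by rw [hF0, sub_zero, hFx]

end BetaSeries

theorem incomplete_beta_hypergeometric (a b : ℝ) (ha : 0 < a) (x : ℝ)
    (hx0 : 0 ≤ x) (hx1 : x < 1) :
    Summable (fun k : ℕ => |poch (a + b) k / poch (a + 1) k * x ^ k|) ∧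
    ∫ u in (0:ℝ)..x, u ^ (a - 1) * (1 - u) ^ (b - 1) =
      (1 / a) * x ^ a * (1 - x) ^ b * ∑' k : ℕ, poch (a + b) k / poch (a + 1) k * x ^ k := by
  set c : ℕ → ℝ := fun k => poch (a + b) k / poch (a + 1) k
  have hc : ∀ k : ℕ, c (k + 1) * (a + k + 1) = c k * (a + b + k) := fun k => by
    simp only [c]
    rw [add_right_comm, poch_div_poch_succ_mul _ (by linarith)]
  have hc0 : c 0 = 1 := by simp [c, poch]
  have hx : |x| < 1 := abs_lt.2 ⟨by linarith, hx1⟩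
  have hsum := summable_abs_mul_pow ha hc hx
  refine ⟨hsum, ?_⟩
  have hrem := tendsto_integral_mul_pow hx0 (intervalIntegrable_rpow_mul_one_sub_rpow ha b hx1)
    (summable_abs_mul_add_mul_pow ha hc hx).of_abs.tendsto_atTop_zero
  have hpartial := hsum.of_abs.hasSum.tendsto_sum_nat.const_mul (x ^ a * (1 - x) ^ b)
  have hlim := tendsto_nhds_unique ((tendsto_const_nhds.sub hrem).congr
    (integral_rpow_mul_one_sub_rpow_sub_eq ha hc hc0 hx0 hx1)) hpartial
  rw [sub_zero] at hlim
  rw [mul_assoc, mul_assoc, ← mul_assoc (x ^ a), ← hlim, one_div, inv_mul_cancel_left₀ ha.ne']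
end

section
/- Let m, n be nonnegative integers and let z ∈ ℂ. Then lim_{ρ → ∞} Z_{m,n}^{ρ²}(z/ρ, z̄/ρ) / ρ^{m+n} = H_{m,n}(z, z̄), where H_{m,n}(z, z̄) = m! n! Σ_{j=0}^{min(m,n)} (−1)^j z̄^{m−j} z^{n−j} / (j! (m−j)! (n−j)!) is the complex Hermite polynomial. -/
open MeasureTheory Finset

/-- Generalized Zernike polynomial `Z_{m,n}^γ(z, z̄)`. -/
noncomputable def Zern (γ : ℝ) (m n : ℕ) (z : ℂ) : ℂ :=
  (Nat.factorial m : ℂ) * (Nat.factorial n : ℂ) * ((poch (γ + 1) (m + n) : ℝ) : ℂ) *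
    ∑ j ∈ Finset.range (min m n + 1),
      ((-1 : ℂ) ^ j * (((1 - ‖z‖ ^ 2) ^ j : ℝ) : ℂ) *
        (starRingEnd ℂ z) ^ (m - j) * z ^ (n - j)) /
      ((poch (γ + 1) j * Nat.factorial j * Nat.factorial (m - j) * Nat.factorial (n - j) : ℝ) : ℂ)

/-- Complex Hermite polynomial `H_{m,n}(z, z̄)`. -/
noncomputable def Herm (m n : ℕ) (z : ℂ) : ℂ :=
  (Nat.factorial m : ℂ) * (Nat.factorial n : ℂ) *
    ∑ j ∈ Finset.range (min m n + 1),
      ((-1 : ℂ) ^ j * (starRingEnd ℂ z) ^ (m - j) * z ^ (n - j)) /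
        ((Nat.factorial j * Nat.factorial (m - j) * Nat.factorial (n - j) : ℕ) : ℂ)

/-!
Since `(γ+1)_{m+n} = (γ+1)_j (γ+1+j)_{m+n-j}`, the `j`-th summand of
`Z_{m,n}^{ρ²}(z/ρ, z̄/ρ) / ρ^{m+n}` is the `j`-th summand of `H_{m,n}(z, z̄)` times the real factor
`(ρ²+1+j)_{m+n-j} / ρ^{2(m+n-j)} · (1 - |z|²/ρ²)^j`: the powers of `ρ` balance exactly.
That factor tends to `1`, because `(x+c)_k / x^k = ∏_{i<k} (1 + (c+i)/x)`.
-/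

open Filter Topology

lemma poch_eq_prod (a : ℝ) (k : ℕ) : poch a k = ∏ i ∈ range k, (a + i) := by
  induction k with
  | zero => simp [poch]
  | succ k ih => rw [poch, ascPochhammer_succ_eval, prod_range_succ, ← ih, poch]

lemma poch_add (a : ℝ) (j k : ℕ) : poch a (j + k) = poch a j * poch (a + j) k := by
  simp only [poch_eq_prod, prod_range_add, Nat.cast_add, add_assoc]

lemma tendsto_poch_add_div_pow (c : ℝ) (k : ℕ) :
    Tendsto (fun x : ℝ => poch (x + c) k / x ^ k) atTop (𝓝 1) := by
  have hfactor : ∀ i : ℕ, Tendsto (fun x : ℝ => 1 + (c + i) / x) atTop (𝓝 1) := fun i => by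
    simpa using tendsto_const_nhds.add ((tendsto_const_nhds (x := c + i)).div_atTop tendsto_id)
  have hprod := tendsto_finsetProd (range k) fun i _ => hfactor i
  rw [prod_const_one] at hprod
  refine hprod.congr' ?_
  filter_upwards [eventually_gt_atTop 0] with x hx
  have hpow : x ^ k = ∏ _i ∈ range k, x := by simp
  rw [poch_eq_prod, hpow, ← prod_div_distrib]
  exact prod_congr rfl fun i _ => by field_simp; ring

lemma tendsto_poch_div_pow_mul_pow (c r : ℝ) (k j : ℕ) :
    Tendsto (fun ρ : ℝ => poch (ρ ^ 2 + c) k / (ρ ^ 2) ^ k * (1 - r / ρ ^ 2) ^ j)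
      atTop (𝓝 1) := by
  have hsq : Tendsto (fun ρ : ℝ => ρ ^ 2) atTop atTop := tendsto_pow_atTop two_ne_zero
  have hdecay : Tendsto (fun ρ : ℝ => (1 - r / ρ ^ 2) ^ j) atTop (𝓝 1) := by
    simpa using ((tendsto_const_nhds (x := (1 : ℝ))).sub
      ((tendsto_const_nhds (x := r)).div_atTop hsq)).pow j
  simpa using ((tendsto_poch_add_div_pow c k).comp hsq).mul hdecay

lemma zern_summand_div_pow {ρ : ℝ} (hρ : 0 < ρ) (z : ℂ) {m n j : ℕ} (hm : j ≤ m) (hn : j ≤ n) :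
    ((poch (ρ ^ 2 + 1) (m + n) : ℝ) : ℂ) *
        (((-1 : ℂ) ^ j * (((1 - ‖z / ρ‖ ^ 2) ^ j : ℝ) : ℂ) *
            (starRingEnd ℂ (z / ρ)) ^ (m - j) * (z / ρ) ^ (n - j)) /
          ((poch (ρ ^ 2 + 1) j * Nat.factorial j * Nat.factorial (m - j) *
            Nat.factorial (n - j) : ℝ) : ℂ)) / (ρ : ℂ) ^ (m + n) =
      ((-1 : ℂ) ^ j * (starRingEnd ℂ z) ^ (m - j) * z ^ (n - j)) /
          ((Nat.factorial j * Nat.factorial (m - j) * Nat.factorial (n - j) : ℕ) : ℂ) *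
        ((poch (ρ ^ 2 + (1 + j)) (m + n - j) / (ρ ^ 2) ^ (m + n - j) *
          (1 - ‖z‖ ^ 2 / ρ ^ 2) ^ j : ℝ) : ℂ) := by
  obtain ⟨a, rfl⟩ := Nat.exists_eq_add_of_le hm
  obtain ⟨b, rfl⟩ := Nat.exists_eq_add_of_le hn
  have hsplit : poch (ρ ^ 2 + 1) (j + a + (j + b)) =
      poch (ρ ^ 2 + 1) j * poch (ρ ^ 2 + (1 + j)) (j + a + b) := by
    rw [show j + a + (j + b) = j + (j + a + b) by omega, poch_add, add_assoc]
  have hnorm : ‖z / ρ‖ ^ 2 = ‖z‖ ^ 2 / ρ ^ 2 := by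
    rw [norm_div, Complex.norm_real, Real.norm_of_nonneg hρ.le, div_pow]
  have hP : (poch (ρ ^ 2 + 1) j : ℂ) ≠ 0 := by exact_mod_cast (ascPochhammer_pos j _ (by positivity)).ne'
  have hρ' : (ρ : ℂ) ≠ 0 := by exact_mod_cast hρ.ne'
  simp only [Nat.add_sub_cancel_left, show j + a + (j + b) - j = j + a + b by omega, hsplit, hnorm,
    map_div₀, Complex.conj_ofReal]
  push_cast
  rw [mul_div_assoc', div_pow, div_pow]
  field_simp
  ring

lemma zern_div_pow_eq {ρ : ℝ} (hρ : 0 < ρ) (m n : ℕ) (z : ℂ) :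
    Zern (ρ ^ 2) m n (z / ρ) / (ρ : ℂ) ^ (m + n) =
      (Nat.factorial m : ℂ) * (Nat.factorial n : ℂ) *
        ∑ j ∈ range (min m n + 1),
          ((-1 : ℂ) ^ j * (starRingEnd ℂ z) ^ (m - j) * z ^ (n - j)) /
              ((Nat.factorial j * Nat.factorial (m - j) * Nat.factorial (n - j) : ℕ) : ℂ) *
            ((poch (ρ ^ 2 + (1 + j)) (m + n - j) / (ρ ^ 2) ^ (m + n - j) *
              (1 - ‖z‖ ^ 2 / ρ ^ 2) ^ j : ℝ) : ℂ) := by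
  rw [Zern, mul_assoc _ (poch _ _ : ℂ), mul_div_assoc, mul_sum, sum_div]
  refine congrArg _ (sum_congr rfl fun j hj => ?_)
  have hj : j ≤ min m n := Nat.lt_succ_iff.mp (mem_range.mp hj)
  exact zern_summand_div_pow hρ z (hj.trans (min_le_left m n)) (hj.trans (min_le_right m n))

theorem zernike_tendsto_hermite (m n : ℕ) (z : ℂ) :
    Filter.Tendsto (fun ρ : ℝ => Zern (ρ ^ 2) m n (z / ρ) / (ρ : ℂ) ^ (m + n))
      Filter.atTop (nhds (Herm m n z)) := by
  have heq : (fun ρ : ℝ => Zern (ρ ^ 2) m n (z / ρ) / (ρ : ℂ) ^ (m + n)) =ᶠ[atTop] _ :=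
    (eventually_gt_atTop 0).mono fun ρ hρ => zern_div_pow_eq hρ m n z
  rw [tendsto_congr' heq, Herm]
  refine (tendsto_finsetSum _ fun j _ => ?_).const_mul _
  have hfactor := (tendsto_poch_div_pow_mul_pow (1 + j) (‖z‖ ^ 2) (m + n - j) j).ofReal
  rw [Complex.ofReal_one] at hfactor
  simpa only [mul_one] using tendsto_const_nhds.mul hfactor
end

section
/- Let ν be real and let f be a smooth complex-valued function on the open unit disk D. Then on D one has both factorizations 𝔏_ν f = ∇_ν^*(∇_ν f) − ν f and 𝔏_ν f = ∇_{ν−1}(∇_{ν−1}^* f) + ν f. -/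
open MeasureTheory

/-- Wirtinger derivative `∂f/∂z = ½(∂f/∂x − i ∂f/∂y)`. -/
noncomputable def wirtZ (f : ℂ → ℂ) (z : ℂ) : ℂ :=
  (1 / 2 : ℂ) * (fderiv ℝ f z 1 - Complex.I * fderiv ℝ f z Complex.I)

/-- Wirtinger derivative `∂f/∂z̄ = ½(∂f/∂x + i ∂f/∂y)`. -/
noncomputable def wirtZbar (f : ℂ → ℂ) (z : ℂ) : ℂ :=
  (1 / 2 : ℂ) * (fderiv ℝ f z 1 + Complex.I * fderiv ℝ f z Complex.I)

/-- The first order operator `∇_α f = −(1−|z|²) ∂f/∂z + α z̄ f`. -/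
noncomputable def nablaOp (α : ℝ) (f : ℂ → ℂ) (z : ℂ) : ℂ :=
  -(((1 - ‖z‖ ^ 2 : ℝ)) : ℂ) * wirtZ f z + (α : ℂ) * (starRingEnd ℂ z) * f z

/-- The formal adjoint `∇_α^* f = (1−|z|²) ∂f/∂z̄ + (α+1) z f`. -/
noncomputable def nablaStar (α : ℝ) (f : ℂ → ℂ) (z : ℂ) : ℂ :=
  (((1 - ‖z‖ ^ 2 : ℝ)) : ℂ) * wirtZbar f z + ((α : ℂ) + 1) * z * f z

/-- The magnetic Laplacian `L_ν`. -/
noncomputable def magL (ν : ℝ) (f : ℂ → ℂ) (z : ℂ) : ℂ :=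
  -(((1 - ‖z‖ ^ 2 : ℝ)) : ℂ) ^ 2 * wirtZ (wirtZbar f) z
    - (ν : ℂ) * (((1 - ‖z‖ ^ 2 : ℝ)) : ℂ) *
        (z * wirtZ f z - (starRingEnd ℂ z) * wirtZbar f z)
    + (ν : ℂ) ^ 2 * ((‖z‖ ^ 2 : ℝ) : ℂ) * f z

section Aux
open Complex

lemma abs_cast_eq (w : ℂ) : ((‖w‖ ^ 2 : ℝ) : ℂ) = w * (starRingEnd ℂ) w := by
  rw [Complex.mul_conj, Complex.sq_norm]

lemma wirtZ_add {f g : ℂ → ℂ} {z : ℂ} (hf : DifferentiableAt ℝ f z)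
    (hg : DifferentiableAt ℝ g z) :
    wirtZ (fun w => f w + g w) z = wirtZ f z + wirtZ g z := by
  simp [wirtZ, fderiv_fun_add hf hg]; ring

lemma wirtZbar_add {f g : ℂ → ℂ} {z : ℂ} (hf : DifferentiableAt ℝ f z)
    (hg : DifferentiableAt ℝ g z) :
    wirtZbar (fun w => f w + g w) z = wirtZbar f z + wirtZbar g z := by
  simp [wirtZbar, fderiv_fun_add hf hg]; ring

lemma wirtZ_mul {f g : ℂ → ℂ} {z : ℂ} (hf : DifferentiableAt ℝ f z)
    (hg : DifferentiableAt ℝ g z) :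
    wirtZ (fun w => f w * g w) z = wirtZ f z * g z + f z * wirtZ g z := by
  simp [wirtZ, fderiv_fun_mul hf hg, smul_eq_mul]; ring

lemma wirtZbar_mul {f g : ℂ → ℂ} {z : ℂ} (hf : DifferentiableAt ℝ f z)
    (hg : DifferentiableAt ℝ g z) :
    wirtZbar (fun w => f w * g w) z = wirtZbar f z * g z + f z * wirtZbar g z := by
  simp [wirtZbar, fderiv_fun_mul hf hg, smul_eq_mul]; ring

lemma wirtZ_const (c : ℂ) (z : ℂ) : wirtZ (fun _ => c) z = 0 := by
  simp [wirtZ]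

lemma wirtZbar_const (c : ℂ) (z : ℂ) : wirtZbar (fun _ => c) z = 0 := by
  simp [wirtZbar]

lemma wirtZ_id (z : ℂ) : wirtZ (fun w => w) z = 1 := by
  simp [wirtZ, fderiv_id']
  try rw [Complex.I_mul_I]
  try norm_num

lemma wirtZbar_id (z : ℂ) : wirtZbar (fun w => w) z = 0 := by
  simp [wirtZbar, fderiv_id']
  try rw [Complex.I_mul_I]
  try ring

lemma conj_fderiv (z : ℂ) :
    fderiv ℝ (fun w => (starRingEnd ℂ) w) z = Complex.conjCLE.toContinuousLinearMap := by
  exact (Complex.conjCLE.toContinuousLinearMap.hasFDerivAt).fderiv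

lemma diff_conj : Differentiable ℝ (fun w : ℂ => (starRingEnd ℂ) w) :=
  Complex.conjCLE.differentiable

lemma wirtZ_conj (z : ℂ) : wirtZ (fun w => (starRingEnd ℂ) w) z = 0 := by
  simp [wirtZ, conj_fderiv, Complex.conj_I]
  try ring_nf
  try rw [Complex.I_sq]
  try ring

lemma wirtZbar_conj (z : ℂ) : wirtZbar (fun w => (starRingEnd ℂ) w) z = 1 := by
  simp [wirtZbar, conj_fderiv, Complex.conj_I]
  try ring_nf
  try rw [Complex.I_sq]
  try ring

noncomputable def cfun : ℂ → ℂ := fun w => 1 - w * (starRingEnd ℂ) w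

lemma diff_cfun : Differentiable ℝ cfun :=
  (differentiable_const _).sub (differentiable_id.mul diff_conj)

lemma wirtZ_cfun (z : ℂ) : wirtZ cfun z = -(starRingEnd ℂ) z := by
  have h0 : cfun = fun w => (1:ℂ) + -(w * (starRingEnd ℂ) w) := by
    funext w; rw [cfun]; ring
  rw [h0, wirtZ_add (differentiableAt_const _)
      ((differentiableAt_fun_id.fun_mul (diff_conj z)).fun_neg), wirtZ_const]
  have h2 : wirtZ (fun w => -(w * (starRingEnd ℂ) w)) z
      = -wirtZ (fun w => w * (starRingEnd ℂ) w) z := by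
    simp [wirtZ, fderiv_fun_neg]; ring
  rw [h2, wirtZ_mul differentiableAt_fun_id (diff_conj z), wirtZ_id, wirtZ_conj]
  ring

lemma wirtZbar_cfun (z : ℂ) : wirtZbar cfun z = -z := by
  have h0 : cfun = fun w => (1:ℂ) + -(w * (starRingEnd ℂ) w) := by
    funext w; rw [cfun]; ring
  rw [h0, wirtZbar_add (differentiableAt_const _)
      ((differentiableAt_fun_id.fun_mul (diff_conj z)).fun_neg), wirtZbar_const]
  have h2 : wirtZbar (fun w => -(w * (starRingEnd ℂ) w)) z
      = -wirtZbar (fun w => w * (starRingEnd ℂ) w) z := by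
    simp [wirtZbar, fderiv_fun_neg]; ring
  rw [h2, wirtZbar_mul differentiableAt_fun_id (diff_conj z), wirtZbar_id, wirtZbar_conj]
  ring

lemma differentiableAt_wirtZ {f : ℂ → ℂ} {z : ℂ} (hf : ContDiffAt ℝ 2 f z) :
    DifferentiableAt ℝ (wirtZ f) z := by
  have h : DifferentiableAt ℝ (fderiv ℝ f) z :=
    (hf.fderiv_right (m := 1) (by norm_num)).differentiableAt one_ne_zero
  exact (differentiableAt_const _).mul ((h.clm_apply (differentiableAt_const _)).sub
    ((differentiableAt_const _).mul (h.clm_apply (differentiableAt_const _))))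

lemma differentiableAt_wirtZbar {f : ℂ → ℂ} {z : ℂ} (hf : ContDiffAt ℝ 2 f z) :
    DifferentiableAt ℝ (wirtZbar f) z := by
  have h : DifferentiableAt ℝ (fderiv ℝ f) z :=
    (hf.fderiv_right (m := 1) (by norm_num)).differentiableAt one_ne_zero
  exact (differentiableAt_const _).mul ((h.clm_apply (differentiableAt_const _)).add
    ((differentiableAt_const _).mul (h.clm_apply (differentiableAt_const _))))

lemma fderiv_apply_const {f : ℂ → ℂ} {z v u : ℂ} (h : DifferentiableAt ℝ (fderiv ℝ f) z) :
    fderiv ℝ (fun w => fderiv ℝ f w v) z u = fderiv ℝ (fderiv ℝ f) z u v := by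
  rw [fderiv_clm_apply h (differentiableAt_const v)]
  simp

lemma wirt_comm {f : ℂ → ℂ} {z : ℂ} (hf : ContDiffAt ℝ 2 f z) :
    wirtZbar (wirtZ f) z = wirtZ (wirtZbar f) z := by
  have h : DifferentiableAt ℝ (fderiv ℝ f) z :=
    (hf.fderiv_right (m := 1) (by norm_num)).differentiableAt one_ne_zero
  have hA : DifferentiableAt ℝ (fun w => fderiv ℝ f w (1:ℂ)) z :=
    h.clm_apply (differentiableAt_const _)
  have hB : DifferentiableAt ℝ (fun w => fderiv ℝ f w Complex.I) z :=
    h.clm_apply (differentiableAt_const _)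
  have hsymm := hf.isSymmSndFDerivAt (by simp)
  have hQ : fderiv ℝ (fderiv ℝ f) z 1 Complex.I = fderiv ℝ (fderiv ℝ f) z Complex.I 1 :=
    hsymm 1 Complex.I
  have e1 : ∀ v : ℂ, fderiv ℝ (wirtZ f) z v =
      (1/2 : ℂ) * (fderiv ℝ (fderiv ℝ f) z v 1
        - Complex.I * fderiv ℝ (fderiv ℝ f) z v Complex.I) := by
    intro v
    have : wirtZ f = fun w =>
        (1/2 : ℂ) * (fderiv ℝ f w 1 - Complex.I * fderiv ℝ f w Complex.I) := rfl
    rw [this, fderiv_const_mul (hA.fun_sub ((differentiableAt_const _).fun_mul hB)),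
        fderiv_fun_sub hA ((differentiableAt_const _).fun_mul hB), fderiv_const_mul hB]
    simp [fderiv_apply_const h]
  have e2 : ∀ v : ℂ, fderiv ℝ (wirtZbar f) z v =
      (1/2 : ℂ) * (fderiv ℝ (fderiv ℝ f) z v 1
        + Complex.I * fderiv ℝ (fderiv ℝ f) z v Complex.I) := by
    intro v
    have : wirtZbar f = fun w =>
        (1/2 : ℂ) * (fderiv ℝ f w 1 + Complex.I * fderiv ℝ f w Complex.I) := rfl
    rw [this, fderiv_const_mul (hA.fun_add ((differentiableAt_const _).fun_mul hB)),
        fderiv_fun_add hA ((differentiableAt_const _).fun_mul hB), fderiv_const_mul hB]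
    simp [fderiv_apply_const h]
    try ring
  rw [wirtZbar, wirtZ, e1 1, e1 Complex.I, e2 1, e2 Complex.I, hQ]
  ring

end Aux

theorem magL_factorizations (ν : ℝ) (f : ℂ → ℂ)
    (hf : ContDiffOn ℝ (⊤ : ℕ∞) f (Metric.ball (0 : ℂ) 1)) :
    ∀ z ∈ Metric.ball (0 : ℂ) 1,
      magL ν f z = nablaStar ν (nablaOp ν f) z - (ν : ℂ) * f z ∧
      magL ν f z = nablaOp (ν - 1) (nablaStar (ν - 1) f) z + (ν : ℂ) * f z := by
  intro z hz
  have hat : ∀ w ∈ Metric.ball (0:ℂ) 1, ContDiffAt ℝ 2 f w := fun w hw =>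
    (hf.contDiffAt (Metric.isOpen_ball.mem_nhds hw)).of_le (WithTop.coe_le_coe.mpr le_top)
  have hz2 : ContDiffAt ℝ 2 f z := hat z hz
  have hdf : DifferentiableAt ℝ f z := hz2.differentiableAt two_ne_zero
  have hdu : DifferentiableAt ℝ (wirtZ f) z := differentiableAt_wirtZ hz2
  have hdv : DifferentiableAt ℝ (wirtZbar f) z := differentiableAt_wirtZbar hz2
  have hcast : ∀ w : ℂ, ((1 - ‖w‖ ^ 2 : ℝ) : ℂ) = cfun w := by
    intro w; rw [cfun, Complex.ofReal_sub, Complex.ofReal_one, abs_cast_eq]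
  -- rewrite nablaOp ν f as a nice function
  have hnop : nablaOp ν f = fun w => -cfun w * wirtZ f w + ((ν : ℂ) * (starRingEnd ℂ) w) * f w := by
    funext w; rw [nablaOp, hcast w]; try ring
  have hnst : nablaStar (ν - 1) f
      = fun w => cfun w * wirtZbar f w + ((ν : ℂ) * w) * f w := by
    funext w; rw [nablaStar, hcast w]; push_cast; try ring
  -- derivative of nablaOp ν f
  have d1 : DifferentiableAt ℝ (fun w => -cfun w * wirtZ f w) z :=
    ((diff_cfun z).neg).mul hdu
  have d2 : DifferentiableAt ℝ (fun w => ((ν : ℂ) * (starRingEnd ℂ) w) * f w) z :=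
    ((differentiableAt_const _).mul (diff_conj z)).mul hdf
  have hwb_nop : wirtZbar (nablaOp ν f) z
      = z * wirtZ f z - cfun z * wirtZbar (wirtZ f) z
        + ((ν : ℂ) * f z + (ν : ℂ) * (starRingEnd ℂ) z * wirtZbar f z) := by
    rw [hnop, wirtZbar_add d1 d2, wirtZbar_mul ((diff_cfun z).fun_neg) hdu,
        wirtZbar_mul ((differentiableAt_const _).fun_mul (diff_conj z)) hdf]
    have hnc : wirtZbar (fun w => -cfun w) z = z := by
      have : wirtZbar (fun w => -cfun w) z = -wirtZbar cfun z := by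
        simp [wirtZbar, fderiv_fun_neg]; ring
      rw [this, wirtZbar_cfun]; ring
    have hcc : wirtZbar (fun w => (ν : ℂ) * (starRingEnd ℂ) w) z = (ν : ℂ) := by
      rw [wirtZbar_mul (differentiableAt_const _) (diff_conj z), wirtZbar_const,
          wirtZbar_conj]; ring
    rw [hnc, hcc]; ring
  have d3 : DifferentiableAt ℝ (fun w => cfun w * wirtZbar f w) z :=
    (diff_cfun z).mul hdv
  have d4 : DifferentiableAt ℝ (fun w => ((ν : ℂ) * w) * f w) z :=
    ((differentiableAt_const _).mul differentiableAt_fun_id).mul hdf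
  have hwz_nst : wirtZ (nablaStar (ν - 1) f) z
      = -(starRingEnd ℂ) z * wirtZbar f z + cfun z * wirtZ (wirtZbar f) z
        + ((ν : ℂ) * f z + (ν : ℂ) * z * wirtZ f z) := by
    rw [hnst, wirtZ_add d3 d4, wirtZ_mul (diff_cfun z) hdv,
        wirtZ_mul ((differentiableAt_const _).fun_mul differentiableAt_fun_id) hdf]
    have hcc : wirtZ (fun w => (ν : ℂ) * w) z = (ν : ℂ) := by
      rw [wirtZ_mul (differentiableAt_const _) differentiableAt_fun_id, wirtZ_const,
          wirtZ_id]
      try ring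
    rw [wirtZ_cfun, hcc]; try ring
  have hcomm : wirtZbar (wirtZ f) z = wirtZ (wirtZbar f) z := wirt_comm hz2
  constructor
  · rw [magL, nablaStar, hcast z, abs_cast_eq, hwb_nop, hcomm]
    rw [show nablaOp ν f z = -cfun z * wirtZ f z + ((ν : ℂ) * (starRingEnd ℂ) z) * f z by
      rw [hnop]]
    rw [cfun]; ring
  · rw [magL, nablaOp, hcast z, abs_cast_eq, hwz_nst]
    rw [show nablaStar (ν - 1) f z = cfun z * wirtZbar f z + ((ν : ℂ) * z) * f z by
      rw [hnst]]
    rw [cfun]; push_cast; try ring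
end

section
/- Let ν be real, let m, n be nonnegative integers, and define on the open unit disk D the function ψ_{m,n}^ν = (∇_{ν−1} ∘ ∇_{ν−2} ∘ ⋯ ∘ ∇_{ν−m})( z^n (1−|z|²)^{ν−m} ). Then ψ_{m,n}^ν satisfies 𝔏_ν ψ_{m,n}^ν = (ν(2m+1) − m(m+1)) · ψ_{m,n}^ν on D. -/
open MeasureTheory

/-- `∇_{ν−1} ∘ ∇_{ν−2} ∘ ⋯ ∘ ∇_{ν−m}` (identity for `m = 0`). -/
noncomputable def nablaChain (ν : ℝ) : ℕ → (ℂ → ℂ) → (ℂ → ℂ)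
  | 0, f => f
  | m + 1, f => nablaOp (ν - 1) (nablaChain (ν - 1) m f)

/-! Functions `(1 - |z|²)^t · p(z, z̄)` with `p` a polynomial are stable under the Wirtinger
derivatives, so `∇_α` and `𝔏_ν` act on them through explicit operators on the polynomial part.
There a direct computation gives the intertwining relation `𝔏_ν ∇_{ν-1} = ∇_{ν-1} (𝔏_{ν-1} + 2ν - 1)`,
and induction on `m` from `𝔏_ν (z^n (1 - |z|²)^ν) = ν z^n (1 - |z|²)^ν` yields the eigenvalue
`λ_{m+1}(ν) = λ_m(ν - 1) + 2ν - 1 = ν(2m + 3) - (m + 1)(m + 2)`. -/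

open MvPolynomial ComplexConjugate Filter Topology

theorem MvPolynomial.pderiv_pderiv_comm {R σ : Type*} [CommSemiring R] (i j : σ)
    (p : MvPolynomial σ R) : pderiv i (pderiv j p) = pderiv j (pderiv i p) := by
  classical
  induction p using MvPolynomial.induction_on with
  | C a => simp
  | add p q hp hq => simp [hp, hq]
  | mul_X p k hp =>
    simp only [pderiv_mul, map_add, hp, pderiv_X]
    by_cases hik : i = k <;> by_cases hjk : j = k <;> simp [hik, hjk]

namespace MagneticLaplacian

/-! A polynomial `p` in `X 0, X 1` stands for the function `z ↦ p(z, z̄)` (see `evalConj`), so that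
`pderiv 0` and `pderiv 1` become `∂/∂z` and `∂/∂z̄` (see `hasFDerivAt_evalConj`). -/

noncomputable def oneSubXY : MvPolynomial (Fin 2) ℂ := 1 - X 0 * X 1

noncomputable def nablaPoly (c : ℂ) (p : MvPolynomial (Fin 2) ℂ) : MvPolynomial (Fin 2) ℂ :=
  C c * X 1 * p - oneSubXY * pderiv 0 p

noncomputable def magLPoly (ν t : ℂ) (p : MvPolynomial (Fin 2) ℂ) : MvPolynomial (Fin 2) ℂ :=
  C (ν ^ 2 - t ^ 2 + t) * (X 0 * X 1) * p + C t * oneSubXY * p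
    + C (t - ν) * oneSubXY * X 0 * pderiv 0 p + C (t + ν) * oneSubXY * X 1 * pderiv 1 p
    - oneSubXY ^ 2 * pderiv 0 (pderiv 1 p)

theorem nablaPoly_C_mul (c a : ℂ) (p : MvPolynomial (Fin 2) ℂ) :
    nablaPoly c (C a * p) = C a * nablaPoly c p := by
  simp only [nablaPoly, pderiv_C_mul]
  ring

theorem magLPoly_nablaPoly (ν t : ℂ) (p : MvPolynomial (Fin 2) ℂ) :
    magLPoly ν t (nablaPoly (ν - 1 + t) p)
      = nablaPoly (ν - 1 + t) (magLPoly (ν - 1) t p) + C (2 * ν - 1) * nablaPoly (ν - 1 + t) p := by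
  simp only [magLPoly, nablaPoly, oneSubXY, sq, map_sub, map_add, map_mul, map_one, map_zero,
    map_ofNat, pderiv_mul, pderiv_C, pderiv_X_self, pderiv_one,
    pderiv_X_of_ne (show (0 : Fin 2) ≠ 1 by decide),
    pderiv_X_of_ne (show (1 : Fin 2) ≠ 0 by decide), pderiv_pderiv_comm (1 : Fin 2) 0]
  ring

noncomputable def chainPoly (n : ℕ) : ℕ → ℂ → MvPolynomial (Fin 2) ℂ
  | 0, _ => X 0 ^ n
  | m + 1, ν => nablaPoly (2 * ν - 2 - m) (chainPoly n m (ν - 1))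

theorem magLPoly_chainPoly (n m : ℕ) (ν : ℂ) :
    magLPoly ν (ν - m) (chainPoly n m ν)
      = C (ν * (2 * m + 1) - m * (m + 1)) * chainPoly n m ν := by
  induction m generalizing ν with
  | zero =>
    simp [chainPoly, magLPoly, oneSubXY]
    ring
  | succ m ih =>
    have ht : ν - ((m + 1 : ℕ) : ℂ) = ν - 1 - m := by push_cast; ring
    have hc : 2 * ν - 2 - m = ν - 1 + (ν - 1 - m) := by ring
    rw [ht, chainPoly, hc, magLPoly_nablaPoly, ih, nablaPoly_C_mul, ← add_mul, ← map_add]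
    congr 2
    push_cast
    ring

noncomputable def evalConj (z : ℂ) : MvPolynomial (Fin 2) ℂ →+* ℂ := eval ![z, conj z]

@[simp] theorem evalConj_X_zero (z : ℂ) : evalConj z (X 0) = z := by simp [evalConj]

@[simp] theorem evalConj_X_one (z : ℂ) : evalConj z (X 1) = conj z := by simp [evalConj]

@[simp] theorem evalConj_C (z a : ℂ) : evalConj z (C a) = a := by simp [evalConj]

noncomputable def wirtingerCLM (a b : ℂ) : ℂ →L[ℝ] ℂ :=
  a • ContinuousLinearMap.id ℝ ℂ + b • Complex.conjCLE.toContinuousLinearMap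

@[simp] theorem wirtingerCLM_apply (a b v : ℂ) : wirtingerCLM a b v = a * v + b * conj v := by
  simp [wirtingerCLM]

@[simp] theorem wirtingerCLM_zero : wirtingerCLM 0 0 = 0 := by
  ext v
  simp

theorem wirtingerCLM_add (a b a' b' : ℂ) :
    wirtingerCLM (a + a') (b + b') = wirtingerCLM a b + wirtingerCLM a' b' := by
  ext v
  simp
  ring

theorem wirtZ_of_hasFDerivAt {f : ℂ → ℂ} {a b z : ℂ} (h : HasFDerivAt f (wirtingerCLM a b) z) :
    wirtZ f z = a := by
  rw [wirtZ, h.fderiv]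
  simp only [wirtingerCLM_apply, map_one, Complex.conj_I, mul_one]
  linear_combination ((b - a) / 2) * Complex.I_sq

theorem wirtZbar_of_hasFDerivAt {f : ℂ → ℂ} {a b z : ℂ}
    (h : HasFDerivAt f (wirtingerCLM a b) z) : wirtZbar f z = b := by
  rw [wirtZbar, h.fderiv]
  simp only [wirtingerCLM_apply, map_one, Complex.conj_I, mul_one]
  linear_combination ((a - b) / 2) * Complex.I_sq

theorem wirtZ_congr {f g : ℂ → ℂ} {z : ℂ} (h : f =ᶠ[𝓝 z] g) : wirtZ f z = wirtZ g z := by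
  rw [wirtZ, wirtZ, h.fderiv_eq]

theorem wirtZbar_congr {f g : ℂ → ℂ} {z : ℂ} (h : f =ᶠ[𝓝 z] g) :
    wirtZbar f z = wirtZbar g z := by
  rw [wirtZbar, wirtZbar, h.fderiv_eq]

theorem nablaOp_congr {α : ℝ} {f g : ℂ → ℂ} {z : ℂ} (h : f =ᶠ[𝓝 z] g) :
    nablaOp α f z = nablaOp α g z := by
  rw [nablaOp, nablaOp, wirtZ_congr h, h.eq_of_nhds]

theorem magL_congr {ν : ℝ} {f g : ℂ → ℂ} {z : ℂ} (h : f =ᶠ[𝓝 z] g) :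
    magL ν f z = magL ν g z := by
  have hbar : wirtZbar f =ᶠ[𝓝 z] wirtZbar g := h.eventuallyEq_nhds.mono fun _ => wirtZbar_congr
  rw [magL, magL, wirtZ_congr hbar, wirtZ_congr h, wirtZbar_congr h, h.eq_of_nhds]

theorem hasFDerivAt_evalConj (p : MvPolynomial (Fin 2) ℂ) (z : ℂ) :
    HasFDerivAt (fun w => evalConj w p)
      (wirtingerCLM (evalConj z (pderiv 0 p)) (evalConj z (pderiv 1 p))) z := by
  induction p using MvPolynomial.induction_on with
  | C a => simpa using hasFDerivAt_const (𝕜 := ℝ) a z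
  | add p q hp hq => simpa only [map_add, wirtingerCLM_add] using hp.fun_add hq
  | mul_X p i hp =>
    fin_cases i
    · simp only [Fin.zero_eta, map_mul, evalConj_X_zero]
      refine (hp.mul (hasFDerivAt_id z)).congr_fderiv ?_
      ext v
      simp
      ring
    · simp only [Fin.mk_one, map_mul, evalConj_X_one]
      refine (hp.mul Complex.conjCLE.hasFDerivAt).congr_fderiv ?_
      ext v
      simp
      ring

theorem one_sub_norm_sq_pos {z : ℂ} (hz : ‖z‖ < 1) : 0 < 1 - ‖z‖ ^ 2 := by
  nlinarith [norm_nonneg z]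

theorem ofReal_norm_sq_eq_mul_conj (z : ℂ) : ((‖z‖ ^ 2 : ℝ) : ℂ) = z * conj z := by
  rw [Complex.ofReal_pow, Complex.mul_conj']

theorem ofReal_rpow_one_sub_norm_sq (t : ℝ) {z : ℂ} (hz : ‖z‖ < 1) :
    (((1 - ‖z‖ ^ 2) ^ t : ℝ) : ℂ) = (((1 - ‖z‖ ^ 2) ^ (t - 1) : ℝ) : ℂ) * (1 - z * conj z) := by
  rw [← ofReal_norm_sq_eq_mul_conj, ← Complex.ofReal_one, ← Complex.ofReal_sub,
    ← Complex.ofReal_mul, ← Real.rpow_add_one (one_sub_norm_sq_pos hz).ne', sub_add_cancel]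

theorem hasFDerivAt_rpow_one_sub_norm_sq (t : ℝ) {z : ℂ} (hz : ‖z‖ < 1) :
    HasFDerivAt (fun w => (((1 - ‖w‖ ^ 2) ^ t : ℝ) : ℂ))
      (wirtingerCLM (-t * conj z * (((1 - ‖z‖ ^ 2) ^ (t - 1) : ℝ) : ℂ))
        (-t * z * (((1 - ‖z‖ ^ 2) ^ (t - 1) : ℝ) : ℂ))) z := by
  have hbase := (hasStrictFDerivAt_norm_sq z).hasFDerivAt.const_sub 1
  have hpow := (Real.hasDerivAt_rpow_const (p := t) (Or.inl (one_sub_norm_sq_pos hz).ne')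
    ).comp_hasFDerivAt z hbase
  refine (Complex.ofRealCLM.hasFDerivAt.comp z hpow).congr_fderiv ?_
  ext v
  apply Complex.ext <;> simp [Complex.inner] <;> ring

noncomputable def weighted (t : ℝ) (p : MvPolynomial (Fin 2) ℂ) (z : ℂ) : ℂ :=
  (((1 - ‖z‖ ^ 2) ^ t : ℝ) : ℂ) * evalConj z p

theorem weighted_C_mul (t : ℝ) (a : ℂ) (p : MvPolynomial (Fin 2) ℂ) (z : ℂ) :
    weighted t (C a * p) z = a * weighted t p z := by
  simp only [weighted, map_mul, evalConj_C]
  ring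

theorem hasFDerivAt_weighted (t : ℝ) (p : MvPolynomial (Fin 2) ℂ) {z : ℂ} (hz : ‖z‖ < 1) :
    HasFDerivAt (weighted t p)
      (wirtingerCLM (weighted (t - 1) (C (-t : ℂ) * X 1 * p + oneSubXY * pderiv 0 p) z)
        (weighted (t - 1) (C (-t : ℂ) * X 0 * p + oneSubXY * pderiv 1 p) z)) z := by
  refine ((hasFDerivAt_rpow_one_sub_norm_sq t hz).mul (hasFDerivAt_evalConj p z)).congr_fderiv ?_
  ext v
  simp [weighted, oneSubXY, ofReal_rpow_one_sub_norm_sq t hz]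
  ring

theorem wirtZ_weighted (t : ℝ) (p : MvPolynomial (Fin 2) ℂ) {z : ℂ} (hz : ‖z‖ < 1) :
    wirtZ (weighted t p) z = weighted (t - 1) (C (-t : ℂ) * X 1 * p + oneSubXY * pderiv 0 p) z :=
  wirtZ_of_hasFDerivAt (hasFDerivAt_weighted t p hz)

theorem wirtZbar_weighted (t : ℝ) (p : MvPolynomial (Fin 2) ℂ) {z : ℂ} (hz : ‖z‖ < 1) :
    wirtZbar (weighted t p) z
      = weighted (t - 1) (C (-t : ℂ) * X 0 * p + oneSubXY * pderiv 1 p) z :=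
  wirtZbar_of_hasFDerivAt (hasFDerivAt_weighted t p hz)

theorem nablaOp_weighted (α t : ℝ) (p : MvPolynomial (Fin 2) ℂ) {z : ℂ} (hz : ‖z‖ < 1) :
    nablaOp α (weighted t p) z = weighted t (nablaPoly (α + t) p) z := by
  rw [nablaOp, wirtZ_weighted t p hz]
  simp only [weighted, nablaPoly, oneSubXY, ofReal_rpow_one_sub_norm_sq t hz, map_sub, map_add,
    map_mul, map_one, evalConj_C, evalConj_X_zero, evalConj_X_one, Complex.ofReal_sub,
    Complex.ofReal_one, ofReal_norm_sq_eq_mul_conj]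
  ring

theorem magL_weighted (ν t : ℝ) (p : MvPolynomial (Fin 2) ℂ) {z : ℂ} (hz : ‖z‖ < 1) :
    magL ν (weighted t p) z = weighted t (magLPoly ν t p) z := by
  have hbar : wirtZbar (weighted t p)
      =ᶠ[𝓝 z] weighted (t - 1) (C (-t : ℂ) * X 0 * p + oneSubXY * pderiv 1 p) :=
    eventually_of_mem ((isOpen_lt continuous_norm continuous_const).mem_nhds hz)
      fun _ hw => wirtZbar_weighted t p hw
  rw [magL, wirtZ_congr hbar, wirtZ_weighted (t - 1) _ hz, wirtZ_weighted t p hz,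
    wirtZbar_weighted t p hz]
  simp only [weighted, magLPoly, oneSubXY, ofReal_rpow_one_sub_norm_sq t hz,
    ofReal_rpow_one_sub_norm_sq (t - 1) hz, map_sub, map_add, map_mul, map_one, map_zero, map_neg,
    map_pow, pderiv_mul, pderiv_C, pderiv_X_self, pderiv_one,
    pderiv_X_of_ne (show (1 : Fin 2) ≠ 0 by decide), evalConj_C, evalConj_X_zero, evalConj_X_one,
    Complex.ofReal_sub, Complex.ofReal_one, ofReal_norm_sq_eq_mul_conj]
  ring

theorem eqOn_nablaChain_weighted (n m : ℕ) (ν : ℝ) :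
    Set.EqOn (nablaChain ν m fun w => w ^ n * (((1 - ‖w‖ ^ 2) ^ (ν - m) : ℝ) : ℂ))
      (weighted (ν - m) (chainPoly n m ν)) (Metric.ball 0 1) := by
  induction m generalizing ν with
  | zero =>
    intro z _
    simp [nablaChain, chainPoly, weighted, mul_comm]
  | succ m ih =>
    intro z hz
    have hexp : ν - ((m + 1 : ℕ) : ℝ) = ν - 1 - m := by push_cast; ring
    have hpar : ((ν - 1 : ℝ) : ℂ) + ((ν - 1 - m : ℝ) : ℂ) = 2 * ν - 2 - m := by push_cast; ring
    have hnhds := (ih (ν - 1)).eventuallyEq_of_mem (Metric.isOpen_ball.mem_nhds hz)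
    rw [hexp, nablaChain, nablaOp_congr hnhds, nablaOp_weighted _ _ _ (mem_ball_zero_iff.mp hz),
      hpar, chainPoly]
    push_cast
    rfl

end MagneticLaplacian

open MagneticLaplacian in
theorem magL_eigenfunctions (ν : ℝ) (m n : ℕ) :
    ∀ z ∈ Metric.ball (0 : ℂ) 1,
      magL ν (nablaChain ν m
          (fun w => w ^ n * (((1 - ‖w‖ ^ 2) ^ (ν - m) : ℝ) : ℂ))) z
        = ((ν * (2 * m + 1) - m * (m + 1) : ℝ) : ℂ) *
            nablaChain ν m
              (fun w => w ^ n * (((1 - ‖w‖ ^ 2) ^ (ν - m) : ℝ) : ℂ)) z := by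
  intro z hz
  have hchain := eqOn_nablaChain_weighted n m ν
  have hcast : ((ν - m : ℝ) : ℂ) = ν - m := by push_cast; ring
  rw [magL_congr (hchain.eventuallyEq_of_mem (Metric.isOpen_ball.mem_nhds hz)),
    magL_weighted _ _ _ (mem_ball_zero_iff.mp hz), hcast, magLPoly_chainPoly, weighted_C_mul,
    hchain hz]
  push_cast
  rfl
end
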